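/- Let N be a positive integer, let k = (k_1, …, k_n) and h = (h_1, …, h_m) be compositions of N with k ≼ h, and suppose n > m. Then there exists a composition k' of N consisting of exactly n − 1 positive integers such that k ≼ k' and k' ≼ h. -/
import Mathlib


/-- `k` is a composition of the positive integer `N`: all parts are positive
and they sum to `N`. -/
def IsComposition {n : ℕ} (N : ℕ) (k : Fin n → ℕ) : Prop :=
  (∀ i, 0 < k i) ∧ ∑ i, k i = N

/-- `k ≼ h`: there is a partition of the index set of `k` into nonempty pairwise
disjoint subsets `I j`, one for each part of `h`, such that `h j` is the sum of the
parts of `k` indexed by `I j`. -/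
def Refines {n m : ℕ} (k : Fin n → ℕ) (h : Fin m → ℕ) : Prop :=
  ∃ I : Fin m → Finset (Fin n),
    (∀ j, (I j).Nonempty) ∧
    (∀ j j', j ≠ j' → Disjoint (I j) (I j')) ∧
    (∀ i, ∃ j, i ∈ I j) ∧
    (∀ j, h j = ∑ i ∈ I j, k i)

/-- If `k ≼ h` are compositions of `N` with `n > m` parts, then there is a
composition `k'` of `N` with exactly `n - 1` parts such that `k ≼ k'` and
`k' ≼ h`. -/
theorem exists_intermediate_refinement (N : ℕ) (hN : 0 < N) {n m : ℕ}
    (k : Fin n → ℕ) (h : Fin m → ℕ)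
    (hk : IsComposition N k) (hh : IsComposition N h)
    (hkh : Refines k h) (hnm : m < n) :
    ∃ k' : Fin (n - 1) → ℕ,
      IsComposition N k' ∧ Refines k k' ∧ Refines k' h := by
  classical
  obtain ⟨I, hne, hdisj, hcov, hsum⟩ := hkh
  -- the blocks cover everything, so their cardinalities sum to `n`
  have hbiUnion : Finset.univ.biUnion I = (Finset.univ : Finset (Fin n)) := by
    ext i
    simpa using hcov i
  have hcard : ∑ j, (I j).card = n := by
    calc ∑ j, (I j).card = (Finset.univ.biUnion I).card :=
          (Finset.card_biUnion (fun j _ j' _ hjj' => hdisj j j' hjj')).symm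
      _ = n := by rw [hbiUnion, Finset.card_univ, Fintype.card_fin]
  -- some block has at least two elements
  have hex : ∃ j₀, 2 ≤ (I j₀).card := by
    by_contra hc
    push_neg at hc
    have h1 : ∑ j, (I j).card ≤ m := by
      calc ∑ j, (I j).card ≤ ∑ _j : Fin m, 1 :=
            Finset.sum_le_sum (fun j _ => Nat.lt_succ_iff.mp (hc j))
        _ = m := by simp
    omega
  obtain ⟨j₀, hj₀⟩ := hex
  obtain ⟨a, ha, b, hb, hab⟩ := Finset.one_lt_card.mp hj₀
  obtain ⟨n', rfl⟩ : ∃ n', n = n' + 1 := ⟨n - 1, by omega⟩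
  -- merge parts `a` and `b`: delete index `b` and add `k b` to the part at `a`
  set g : Fin (n' + 1) → ℕ := fun x => if x = a then k a + k b else k x with hg
  set k' : Fin n' → ℕ := fun i => g (b.succAbove i) with hk'
  have hinj : Function.Injective b.succAbove := Fin.succAbove_right_injective
  have hbrange : b ∉ Set.range b.succAbove := by
    rw [Fin.range_succAbove]; simp
  have harange : a ∈ Set.range b.succAbove := by
    rw [Fin.range_succAbove]; simpa using hab
  obtain ⟨a', ha'⟩ := harange
  have hba : ¬ b = a := fun hc => hab hc.symm
  refine ⟨k', ⟨fun i => ?_, ?_⟩, ?_, ?_⟩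
  · -- positivity
    simp only [hk', hg]
    split <;> [exact Nat.add_pos_left (hk.1 a) _; exact hk.1 _]
  · -- sums to N
    have hgb : g b = k b := by
      simp only [hg]
      rw [if_neg hba]
    have hgsum : ∑ x, g x = ∑ x, k x + k b := by
      have hpt : ∀ x, g x = k x + if x = a then k b else 0 := by
        intro x
        by_cases hx : x = a
        · subst hx; simp [hg]
        · simp [hg, hx]
      calc ∑ x, g x = ∑ x, (k x + if x = a then k b else 0) :=
            Finset.sum_congr rfl fun x _ => hpt x
        _ = (∑ x, k x) + ∑ x, (if x = a then k b else 0) := Finset.sum_add_distrib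
        _ = ∑ x, k x + k b := by simp
    have hsplit : ∑ x, g x = g b + ∑ i, k' i := by
      rw [Fin.sum_univ_succAbove g b]
    have hsk : ∑ x, k x = N := hk.2
    have : ∑ i, k' i = ∑ i : Fin (n' + 1 - 1), k' i := rfl
    omega
  · -- Refines k k'
    refine ⟨fun i => if b.succAbove i = a then {a, b} else {b.succAbove i}, ?_, ?_, ?_, ?_⟩
    · intro i
      dsimp only
      split <;> simp
    · intro i i' hii'
      dsimp only
      have hne' : b.succAbove i ≠ b.succAbove i' := fun hc => hii' (hinj hc)
      have hib : b.succAbove i ≠ b := fun hc => hbrange ⟨i, hc⟩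
      have hi'b : b.succAbove i' ≠ b := fun hc => hbrange ⟨i', hc⟩
      split <;> split <;> rename_i h1 h2
      · exact absurd (h1.trans h2.symm) hne'
      · rw [Finset.disjoint_left]
        intro x hx
        simp only [Finset.mem_insert, Finset.mem_singleton] at hx ⊢
        rcases hx with rfl | rfl
        · exact fun hc => h2 hc.symm
        · exact fun hc => hi'b hc.symm
      · rw [Finset.disjoint_left]
        intro x hx
        simp only [Finset.mem_singleton] at hx
        subst hx
        simp only [Finset.mem_insert, Finset.mem_singleton]
        push_neg
        exact ⟨h1, hib⟩
      · rw [Finset.disjoint_left]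
        intro x hx
        simp only [Finset.mem_singleton] at hx ⊢
        subst hx
        exact hne'
    · intro x
      rcases eq_or_ne x b with rfl | hxb
      · refine ⟨a', ?_⟩
        dsimp only
        rw [if_pos ha']
        simp
      · have hxr : x ∈ Set.range b.succAbove := by rw [Fin.range_succAbove]; simpa using hxb
        obtain ⟨i, rfl⟩ := hxr
        refine ⟨i, ?_⟩
        dsimp only
        split
        · rename_i h1; rw [h1]; simp
        · simp
    · intro i
      simp only [hk', hg]
      split
      · rw [Finset.sum_pair hab]
      · rw [Finset.sum_singleton]
  · -- Refines k' h
    have hIJinj : ∀ j, Set.InjOn b.succAbove (b.succAbove ⁻¹' (I j)) := fun j => hinj.injOn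
    refine ⟨fun j => (I j).preimage b.succAbove (hIJinj j), ?_, ?_, ?_, ?_⟩
    · intro j
      rcases eq_or_ne j j₀ with rfl | hj
      · exact ⟨a', by simp [Finset.mem_preimage, ha', ha]⟩
      · obtain ⟨x, hx⟩ := hne j
        have hxb : x ≠ b := by
          rintro rfl
          exact (Finset.disjoint_left.mp (hdisj j j₀ hj) hx) hb
        have hxr : x ∈ Set.range b.succAbove := by rw [Fin.range_succAbove]; simpa using hxb
        obtain ⟨i, rfl⟩ := hxr
        exact ⟨i, Finset.mem_preimage.mpr hx⟩
    · intro j j' hjj'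
      have hd := hdisj j j' hjj'
      rw [Finset.disjoint_left] at hd ⊢
      intro x hx hx'
      exact hd (Finset.mem_preimage.mp hx) (Finset.mem_preimage.mp hx')
    · intro i
      obtain ⟨j, hj⟩ := hcov (b.succAbove i)
      exact ⟨j, Finset.mem_preimage.mpr hj⟩
    · intro j
      dsimp only
      have hkg : ∀ i ∈ (I j).preimage b.succAbove (hIJinj j), k' i = g (b.succAbove i) :=
        fun i _ => rfl
      rw [Finset.sum_congr rfl hkg]
      rw [Finset.sum_preimage' b.succAbove (I j) (hIJinj j) g]
      rcases eq_or_ne j j₀ with rfl | hj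
      · -- block containing both a and b
        have hfilter : {x ∈ I j | x ∈ Set.range b.succAbove} = (I j).erase b := by
          ext x
          simp [Fin.range_succAbove, Finset.mem_erase, Finset.mem_filter, and_comm]
        rw [hfilter]
        have hsplit : ∑ x ∈ (I j).erase b, g x
            = ∑ x ∈ (I j).erase b, k x + k b := by
          have haerase : a ∈ (I j).erase b := Finset.mem_erase.mpr ⟨hab, ha⟩
          rw [← Finset.add_sum_erase _ g haerase, ← Finset.add_sum_erase _ k haerase]
          have heq : ∀ x ∈ ((I j).erase b).erase a, g x = k x := by
            intro x hx
            have hxa : x ≠ a := (Finset.mem_erase.mp hx).1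
            simp [hg, hxa]
          rw [Finset.sum_congr rfl heq]
          have hga : g a = k a + k b := by simp [hg]
          have hsk' : (((I j).erase b).erase a).sum k
              = ∑ x ∈ ((I j).erase b).erase a, k x := rfl
          omega
        rw [hsplit, Finset.sum_erase_add _ _ hb, hsum j]
      · -- block containing neither a nor b
        have hbj : b ∉ I j := fun hc =>
          (Finset.disjoint_left.mp (hdisj j j₀ hj) hc) hb
        have haj : a ∉ I j := fun hc =>
          (Finset.disjoint_left.mp (hdisj j j₀ hj) hc) ha
        have hfilter : {x ∈ I j | x ∈ Set.range b.succAbove} = I j := by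
          ext x
          simp only [Finset.mem_filter, Fin.range_succAbove, Set.mem_compl_iff,
            Set.mem_singleton_iff, and_iff_left_iff_imp]
          rintro hx rfl
          exact hbj hx
        rw [hfilter]
        have heq : ∀ x ∈ I j, g x = k x := by
          intro x hx
          have hxa : x ≠ a := by rintro rfl; exact haj hx
          simp [hg, hxa]
        rw [Finset.sum_congr rfl heq, hsum j]
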